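/- Given a contraction (π, ∇, h) of N onto M, the sum Im(h) + Im(d_N) is direct: Im(h) ∩ Im(d_N) = 0. If moreover d_M = 0, then Im(h) ⊕ Im(d_N) = Ker(π). -/

import Mathlib

/-! The homotopy identity `d h + h d = ∇ π - id` shows that an element killed by `π`, `d` and `h`
is zero, and that every element of `ker π` is `-(d (h x) + h (d x)) ∈ Im d + Im h`.
Since `h² = 0`, `π h = 0` and `d² = 0`, the images of `h` and `d` lie in `ker π ⊓ ker h` and
`ker d` respectively, which gives directness; if `d_M = 0`, the chain map `π` kills `Im d`. -/

namespace LinearMap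

variable {R N M : Type*} [Ring R] [AddCommGroup N] [Module R N] [AddCommGroup M] [Module R M]
  {d h : N →ₗ[R] N} {π : N →ₗ[R] M} {ι : M →ₗ[R] N}

theorem homotopy_apply_of_mem_ker (hhtpy : d ∘ₗ h + h ∘ₗ d = ι ∘ₗ π - id) {x : N}
    (hx : x ∈ ker π) : d (h x) + h (d x) = -x := by
  simpa [mem_ker.1 hx] using congr($hhtpy x)

theorem disjoint_ker_inf_ker_ker_of_homotopy (hhtpy : d ∘ₗ h + h ∘ₗ d = ι ∘ₗ π - id) :
    Disjoint (ker π ⊓ ker h) (ker d) := by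
  rw [Submodule.disjoint_def]
  rintro x ⟨hπx, hhx⟩ hdx
  simpa [mem_ker.1 hhx, mem_ker.1 hdx] using homotopy_apply_of_mem_ker hhtpy hπx

theorem ker_le_range_sup_range_of_homotopy (hhtpy : d ∘ₗ h + h ∘ₗ d = ι ∘ₗ π - id) :
    ker π ≤ range d ⊔ range h := by
  intro x hx
  rw [← neg_neg x, ← homotopy_apply_of_mem_ker hhtpy hx, neg_add]
  exact Submodule.add_mem_sup (neg_mem (mem_range_self d _)) (neg_mem (mem_range_self h _))

end LinearMap

theorem contraction_imh_imd_ker_pi_general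
    (F : Type*) [Field F]
    (N : Type*) [AddCommGroup N] [Module F N]
    (M : Type*) [AddCommGroup M] [Module F M]
    (dN : N →ₗ[F] N) (dM : M →ₗ[F] M)
    (π : N →ₗ[F] M) (nb : M →ₗ[F] N) (h : N →ₗ[F] N)
    (hdN : dN ∘ₗ dN = 0)
    (hπchain : π ∘ₗ dN = dM ∘ₗ π)
    (hhtpy : dN ∘ₗ h + h ∘ₗ dN = nb ∘ₗ π - LinearMap.id)
    (hπh : π ∘ₗ h = 0) (hhh : h ∘ₗ h = 0) :
    Disjoint (LinearMap.range h) (LinearMap.range dN) ∧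
    (dM = 0 → LinearMap.range h ⊔ LinearMap.range dN = LinearMap.ker π) := by
  have range_h_le : LinearMap.range h ≤ LinearMap.ker π := LinearMap.range_le_ker_iff.2 hπh
  have range_disjoint := (LinearMap.disjoint_ker_inf_ker_ker_of_homotopy hhtpy).mono
    (le_inf range_h_le (LinearMap.range_le_ker_iff.2 hhh)) (LinearMap.range_le_ker_iff.2 hdN)
  refine ⟨range_disjoint, fun hdM0 => le_antisymm ?_ ?_⟩
  · have range_dN_le : LinearMap.range dN ≤ LinearMap.ker π :=
      LinearMap.range_le_ker_iff.2 (by rw [hπchain, hdM0, LinearMap.zero_comp])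
    exact sup_le range_h_le range_dN_le
  · rw [sup_comm]
    exact LinearMap.ker_le_range_sup_range_of_homotopy hhtpy

/-- for a contraction (π, ∇, h) of N onto M, the sum Im(h) + Im(dN) is
direct; if moreover dM = 0, then Im(h) ⊕ Im(dN) = Ker(π). -/
theorem contraction_imh_imd_ker_pi
    (F : Type*) [Field F] [CharZero F]
    (N : Type*) [AddCommGroup N] [Module F N]
    (M : Type*) [AddCommGroup M] [Module F M]
    (dN : N →ₗ[F] N) (dM : M →ₗ[F] M)
    (π : N →ₗ[F] M) (nb : M →ₗ[F] N) (h : N →ₗ[F] N)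
    (hdN : dN ∘ₗ dN = 0) (hdM : dM ∘ₗ dM = 0)
    (hπchain : π ∘ₗ dN = dM ∘ₗ π) (hnbchain : dN ∘ₗ nb = nb ∘ₗ dM)
    (hretr : π ∘ₗ nb = LinearMap.id)
    (hhtpy : dN ∘ₗ h + h ∘ₗ dN = nb ∘ₗ π - LinearMap.id)
    (hπh : π ∘ₗ h = 0) (hhnb : h ∘ₗ nb = 0) (hhh : h ∘ₗ h = 0) :
    Disjoint (LinearMap.range h) (LinearMap.range dN) ∧
    (dM = 0 → LinearMap.range h ⊔ LinearMap.range dN = LinearMap.ker π) :=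
  contraction_imh_imd_ker_pi_general F N M dN dM π nb h hdN hπchain hhtpy hπh hhh
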